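/- arXiv:1512.06500 — 4 statements merged into one kernel-verified Lean document; each statement's English description precedes it below -/
import Mathlib

section
/- Let S_W, S_B be real symmetric d×d matrices with eigenvalues ν_1 ≥ ... ≥ ν_d and μ_1 ≥ ... ≥ μ_d respectively, and let λ_1(M) ≥ ... ≥ λ_d(M) be the eigenvalues of M = exp(−S_W/2)·exp(S_B)·exp(−S_W/2). Then for each i, exp(μ_i − ν_1) ≤ λ_i(M) ≤ exp(μ_i − ν_d). -/
/-!
Write `C = exp(-S_W/2)` and `F = exp(S_B/2)`. Then `M = Cᴴ F² C = (F C)ᴴ (F C)` has the same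
characteristic polynomial, hence the same ordered eigenvalues, as `N = F (C Cᴴ) F`, where
`C Cᴴ = exp(-S_W)`. As the spectrum of `S_W` lies in `[ν_d, ν_1]`, we have
`e^{-ν_1} ≤ exp(-S_W) ≤ e^{-ν_d}` in the Loewner order, and conjugating by `F` gives
`e^{-ν_1} exp(S_B) ≤ N ≤ e^{-ν_d} exp(S_B)`. Weyl's monotonicity principle (the `i`-th largest
eigenvalue is monotone in the Loewner order) turns this into the claim, because the ordered
eigenvalues of `exp(S_B)` are the `e^{μ_i}`.
-/

open scoped InnerProductSpace

lemma Antitone.eq_of_map_univ_eq {α : Type*} [PartialOrder α] {k : ℕ} {f g : Fin k → α}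
    (hf : Antitone f) (hg : Antitone g)
    (h : Finset.univ.val.map f = Finset.univ.val.map g) : f = g := by
  rw [Fin.univ_val_map, Fin.univ_val_map, Multiset.coe_eq_coe] at h
  exact List.ofFn_injective (h.eq_of_sortedGE hf.sortedGE_ofFn hg.sortedGE_ofFn)

section InnerProductSpace

variable {𝕜 E : Type*} [RCLike 𝕜] [NormedAddCommGroup E] [InnerProductSpace 𝕜 E]
  [FiniteDimensional 𝕜 E] {n : ℕ}

-- These are only `n - 1` linear conditions on a space of dimension `n`.
lemma exists_ne_zero_inner_eq_zero (hn : Module.finrank 𝕜 E = n) (u w : Fin n → E)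
    (i : Fin n) :
    ∃ x : E, x ≠ 0 ∧ (∀ j, i < j → ⟪u j, x⟫_𝕜 = 0) ∧ (∀ j, j < i → ⟪w j, x⟫_𝕜 = 0) := by
  let L : E →ₗ[𝕜] ({j : Fin n // j ≠ i} → 𝕜) :=
    LinearMap.pi fun j => if i < j.1 then innerₛₗ 𝕜 (u j) else innerₛₗ 𝕜 (w j)
  have hcard : Fintype.card {j : Fin n // j ≠ i} = n - 1 := by simp [Fintype.card_subtype_compl]
  obtain ⟨x, hxL, hx0⟩ := Submodule.exists_mem_ne_zero_of_ne_bot <|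
    LinearMap.ker_ne_bot_of_finrank_lt (f := L) (by simp [hcard, hn]; have := i.pos; omega)
  refine ⟨x, hx0, fun j hj => ?_, fun j hj => ?_⟩
  · simpa [L, hj, hj.ne'] using congrFun hxL ⟨j, hj.ne'⟩
  · simpa [L, hj.not_gt, hj.ne] using congrFun hxL ⟨j, hj.ne⟩

namespace LinearMap.IsSymmetric

variable {T S : E →ₗ[𝕜] E} (hT : T.IsSymmetric) (hn : Module.finrank 𝕜 E = n)

lemma re_inner_apply_self_eq_sum (x : E) :
    RCLike.re ⟪T x, x⟫_𝕜 =
      ∑ j, hT.eigenvalues hn j * ‖⟪hT.eigenvectorBasis hn j, x⟫_𝕜‖ ^ 2 := by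
  rw [← (hT.eigenvectorBasis hn).sum_inner_mul_inner (T x) x, map_sum]
  refine Finset.sum_congr rfl fun j _ => ?_
  rw [hT, hT.apply_eigenvectorBasis, inner_smul_right, ← inner_conj_symm, mul_assoc,
    RCLike.conj_mul, ← RCLike.ofReal_pow, ← RCLike.ofReal_mul, RCLike.ofReal_re]

lemma eigenvalues_mul_norm_sq_le_re_inner {i : Fin n} {x : E}
    (hx : ∀ j, i < j → ⟪hT.eigenvectorBasis hn j, x⟫_𝕜 = 0) :
    hT.eigenvalues hn i * ‖x‖ ^ 2 ≤ RCLike.re ⟪T x, x⟫_𝕜 := by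
  rw [hT.re_inner_apply_self_eq_sum hn, ← (hT.eigenvectorBasis hn).sum_sq_norm_inner_right,
    Finset.mul_sum]
  refine Finset.sum_le_sum fun j _ => ?_
  rcases le_or_gt j i with hji | hij
  · exact mul_le_mul_of_nonneg_right (hT.eigenvalues_antitone hn hji) (sq_nonneg _)
  · simp [hx j hij]

lemma re_inner_le_eigenvalues_mul_norm_sq {i : Fin n} {x : E}
    (hx : ∀ j, j < i → ⟪hT.eigenvectorBasis hn j, x⟫_𝕜 = 0) :
    RCLike.re ⟪T x, x⟫_𝕜 ≤ hT.eigenvalues hn i * ‖x‖ ^ 2 := by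
  rw [hT.re_inner_apply_self_eq_sum hn, ← (hT.eigenvectorBasis hn).sum_sq_norm_inner_right,
    Finset.mul_sum]
  refine Finset.sum_le_sum fun j _ => ?_
  rcases le_or_gt i j with hij | hji
  · exact mul_le_mul_of_nonneg_right (hT.eigenvalues_antitone hn hij) (sq_nonneg _)
  · simp [hx j hji]

theorem eigenvalues_le_eigenvalues_of_le (hS : S.IsSymmetric) (hTS : T ≤ S) (i : Fin n) :
    hT.eigenvalues hn i ≤ hS.eigenvalues hn i := by
  obtain ⟨x, hx0, hxT, hxS⟩ :=
    exists_ne_zero_inner_eq_zero hn (hT.eigenvectorBasis hn) (hS.eigenvectorBasis hn) i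
  have hTS_x : RCLike.re ⟪T x, x⟫_𝕜 ≤ RCLike.re ⟪S x, x⟫_𝕜 := by
    simpa [inner_sub_left] using ((LinearMap.le_def T S).1 hTS).2 x
  refine le_of_mul_le_mul_right ?_ (by positivity : 0 < ‖x‖ ^ 2)
  calc hT.eigenvalues hn i * ‖x‖ ^ 2 ≤ RCLike.re ⟪T x, x⟫_𝕜 :=
        hT.eigenvalues_mul_norm_sq_le_re_inner hn hxT
    _ ≤ RCLike.re ⟪S x, x⟫_𝕜 := hTS_x
    _ ≤ hS.eigenvalues hn i * ‖x‖ ^ 2 := hS.re_inner_le_eigenvalues_mul_norm_sq hn hxS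

end LinearMap.IsSymmetric

end InnerProductSpace

namespace Matrix.IsHermitian

variable {𝕜 n : Type*} [RCLike 𝕜] [Fintype n] [DecidableEq n] {A B : Matrix n n 𝕜}

theorem eigenvalues₀_eq_of_charpoly_eq (hA : A.IsHermitian) (hB : B.IsHermitian)
    (h : A.charpoly = B.charpoly) : hA.eigenvalues₀ = hB.eigenvalues₀ := by
  simp_rw [← List.ofFn_inj, ← sort_roots_charpoly_eq_eigenvalues₀, h]

lemma map_univ_eigenvalues (hA : A.IsHermitian) :
    Finset.univ.val.map hA.eigenvalues = Finset.univ.val.map hA.eigenvalues₀ := by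
  rw [show hA.eigenvalues = hA.eigenvalues₀ ∘ _ from rfl, ← Multiset.map_map,
    Multiset.map_univ_val_equiv]

open Polynomial in
theorem eigenvalues₀_cfc (hA : A.IsHermitian) {f : ℝ → ℝ} (hf : Monotone f)
    (hfA : (cfc f A).IsHermitian) : hfA.eigenvalues₀ = f ∘ hA.eigenvalues₀ := by
  refine hfA.eigenvalues₀_antitone.eq_of_map_univ_eq
    (hf.comp_antitone hA.eigenvalues₀_antitone) ?_
  apply Multiset.map_injective (RCLike.ofReal_injective (K := 𝕜))
  rw [Multiset.map_map, ← hfA.roots_charpoly_eq_eigenvalues₀, hA.charpoly_cfc_eq f,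
    roots_prod _ _ (by simp [Finset.prod_ne_zero_iff, X_sub_C_ne_zero]), ← Multiset.map_map f,
    ← hA.map_univ_eigenvalues]
  simp only [roots_X_sub_C, Multiset.bind_singleton, Multiset.map_map]
  rfl

theorem eigenvalues₀_comp_finCongr {d : ℕ} {A : Matrix (Fin d) (Fin d) 𝕜}
    (hA : A.IsHermitian) {lam : Fin d → ℝ} (hlam : Antitone lam)
    (h : ∃ σ : Equiv.Perm (Fin d), lam = hA.eigenvalues ∘ σ) :
    hA.eigenvalues₀ ∘ finCongr (Fintype.card_fin d).symm = lam := by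
  obtain ⟨σ, rfl⟩ := h
  refine (hA.eigenvalues₀_antitone.comp_monotone
    (f := finCongr (Fintype.card_fin d).symm) fun _ _ h => h).eq_of_map_univ_eq hlam ?_
  rw [← Multiset.map_map, Multiset.map_univ_val_equiv, ← map_univ_eigenvalues,
    ← Multiset.map_map, Multiset.map_univ_val_equiv]

open scoped MatrixOrder

theorem eigenvalues₀_le_eigenvalues₀_of_le (hA : A.IsHermitian) (hB : B.IsHermitian)
    (hAB : A ≤ B) (i : Fin (Fintype.card n)) : hA.eigenvalues₀ i ≤ hB.eigenvalues₀ i :=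
  LinearMap.IsSymmetric.eigenvalues_le_eigenvalues_of_le _ _ _
    (by rw [LinearMap.le_def, ← map_sub, isPositive_toEuclideanLin_iff]; exact hAB) i

theorem eigenvalues₀_smul (hA : A.IsHermitian) {c : ℝ} (hc : 0 ≤ c)
    (hcA : (c • A).IsHermitian) :
    hcA.eigenvalues₀ = c • hA.eigenvalues₀ := by
  have hfA : (cfc (c * ·) A).IsHermitian := by rwa [cfc_const_mul_id c A]
  rw [eigenvalues₀_eq_of_charpoly_eq hcA hfA (by rw [cfc_const_mul_id c A]),
    hA.eigenvalues₀_cfc (monotone_mul_left_of_nonneg hc) hfA]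
  rfl

theorem eigenvalues₀_conj_bounds {C F : Matrix n n 𝕜} (hF : F.IsHermitian) {m m' : ℝ}
    (hm : 0 ≤ m) (hm' : 0 ≤ m') (hCm : algebraMap ℝ _ m ≤ C * Cᴴ)
    (hCm' : C * Cᴴ ≤ algebraMap ℝ _ m') (hFF : (F * F).IsHermitian)
    (hM : (Cᴴ * (F * F) * C).IsHermitian) (i : Fin (Fintype.card n)) :
    m * hFF.eigenvalues₀ i ≤ hM.eigenvalues₀ i ∧
      hM.eigenvalues₀ i ≤ m' * hFF.eigenvalues₀ i := by
  have hN : (F * (C * Cᴴ) * F).IsHermitian := by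
    simpa [hF.eq] using
      isHermitian_conjTranspose_mul_mul F (isHermitian_mul_conjTranspose_self C)
  have hMN : hM.eigenvalues₀ = hN.eigenvalues₀ := eigenvalues₀_eq_of_charpoly_eq hM hN <| by
    rw [show Cᴴ * (F * F) * C = (Cᴴ * F) * (F * C) by simp only [mul_assoc], charpoly_mul_comm]
    simp only [mul_assoc]
  have hsmul (t : ℝ) : t • (F * F) = F * algebraMap ℝ _ t * F := by
    simp [Algebra.algebraMap_eq_smul_one]
  have hmFF := hFF.smul (IsSelfAdjoint.all m)
  have hm'FF := hFF.smul (IsSelfAdjoint.all m')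
  constructor
  · calc m * hFF.eigenvalues₀ i = hmFF.eigenvalues₀ i := by
          rw [eigenvalues₀_smul hFF hm hmFF]; rfl
      _ ≤ hN.eigenvalues₀ i := eigenvalues₀_le_eigenvalues₀_of_le _ _
          (by rw [hsmul]; exact hF.isSelfAdjoint.conjugate_le_conjugate hCm) i
      _ = hM.eigenvalues₀ i := by rw [hMN]
  · calc hM.eigenvalues₀ i = hN.eigenvalues₀ i := by rw [hMN]
      _ ≤ hm'FF.eigenvalues₀ i := eigenvalues₀_le_eigenvalues₀_of_le _ _
          (by rw [hsmul]; exact hF.isSelfAdjoint.conjugate_le_conjugate hCm') i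
      _ = m' * hFF.eigenvalues₀ i := by rw [eigenvalues₀_smul hFF hm' hm'FF]; rfl

end Matrix.IsHermitian

namespace Matrix

variable {n : Type*} [Fintype n] [DecidableEq n]

theorem exp_mul_self_eq_exp_two_nsmul (A : Matrix n n ℝ) :
    NormedSpace.exp A * NormedSpace.exp A = NormedSpace.exp (2 • A) := by
  rw [← pow_two, exp_nsmul]

namespace IsHermitian

variable {A : Matrix n n ℝ}

theorem exp_eq_cfc (hA : A.IsHermitian) : NormedSpace.exp A = cfc Real.exp A := by
  -- The L2 operator norm only supplies the normed-algebra structure that the CFC lemma asks for;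
  -- `NormedSpace.exp` depends on the topology alone.
  open scoped Matrix.Norms.L2Operator in
  exact (CFC.real_exp_eq_normedSpace_exp hA.isSelfAdjoint).symm

theorem eigenvalues₀_exp (hA : A.IsHermitian) (hE : (NormedSpace.exp A).IsHermitian) :
    hE.eigenvalues₀ = Real.exp ∘ hA.eigenvalues₀ := by
  have hcfc : (cfc Real.exp A).IsHermitian := cfc_predicate _ A
  rw [← hA.eigenvalues₀_cfc Real.exp_monotone hcfc]
  exact hE.eigenvalues₀_eq_of_charpoly_eq hcfc (by rw [hA.exp_eq_cfc])

open scoped MatrixOrder in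
theorem exp_mem_Icc_of_spectrum_subset (hA : A.IsHermitian) {a b : ℝ}
    (h : spectrum ℝ A ⊆ Set.Icc a b) :
    NormedSpace.exp A ∈
      Set.Icc (algebraMap ℝ _ (Real.exp a)) (algebraMap ℝ _ (Real.exp b)) := by
  rw [hA.exp_eq_cfc]
  exact ⟨algebraMap_le_cfc _ _ _ fun x hx => Real.exp_le_exp.2 (h hx).1,
    cfc_le_algebraMap _ _ _ fun x hx => Real.exp_le_exp.2 (h hx).2⟩

theorem eigenvalues₀_exp_conj_bounds {SW SB : Matrix n n ℝ} (hW : SW.IsHermitian)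
    (hB : SB.IsHermitian) {a b : ℝ} (hspec : spectrum ℝ SW ⊆ Set.Icc a b)
    (hM : (NormedSpace.exp (-((1 / 2 : ℝ) • SW)) * NormedSpace.exp SB *
      NormedSpace.exp (-((1 / 2 : ℝ) • SW))).IsHermitian) (i : Fin (Fintype.card n)) :
    Real.exp (hB.eigenvalues₀ i - b) ≤ hM.eigenvalues₀ i ∧
      hM.eigenvalues₀ i ≤ Real.exp (hB.eigenvalues₀ i - a) := by
  set C := NormedSpace.exp (-((1 / 2 : ℝ) • SW))
  set F := NormedSpace.exp ((1 / 2 : ℝ) • SB)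
  have hC : C.IsHermitian := (hW.smul (IsSelfAdjoint.all _)).neg.exp
  have hF : F.IsHermitian := (hB.smul (IsSelfAdjoint.all _)).exp
  have hCC : C * Cᴴ = NormedSpace.exp (-SW) := by
    rw [hC.eq, exp_mul_self_eq_exp_two_nsmul]; congr 1; module
  have hFF : F * F = NormedSpace.exp SB := by
    rw [exp_mul_self_eq_exp_two_nsmul]; congr 1; module
  have hFFh : (F * F).IsHermitian := hFF ▸ hB.exp
  have hM' : (Cᴴ * (F * F) * C).IsHermitian := by rwa [hC.eq, hFF]
  have hspec' : spectrum ℝ (-SW) ⊆ Set.Icc (-b) (-a) := by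
    rwa [← spectrum.neg_eq, Set.neg_subset, Set.neg_Icc, neg_neg, neg_neg]
  obtain ⟨hCm, hCm'⟩ := hCC ▸ hW.neg.exp_mem_Icc_of_spectrum_subset hspec'
  obtain ⟨hlow, hup⟩ := hF.eigenvalues₀_conj_bounds (Real.exp_pos _).le (Real.exp_pos _).le
    hCm hCm' hFFh hM' i
  rw [hFFh.eigenvalues₀_eq_of_charpoly_eq hB.exp (by rw [hFF]), hB.eigenvalues₀_exp,
    Function.comp_apply] at hlow hup
  rw [hM.eigenvalues₀_eq_of_charpoly_eq hM' (by rw [hC.eq, hFF]), sub_eq_neg_add,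
    sub_eq_neg_add, Real.exp_add, Real.exp_add]
  exact ⟨hlow, hup⟩

end IsHermitian

end Matrix

open Matrix

/-- Eigenvalue bounds: with `ν`, `μ`, `lam` the decreasingly-ordered eigenvalues of
`S_W`, `S_B` and `M = exp(−S_W/2)·exp(S_B)·exp(−S_W/2)` respectively, one has
`exp(μ_i − ν_1) ≤ λ_i(M) ≤ exp(μ_i − ν_d)`. -/
theorem eigenvalue_bounds_one {d : ℕ} (SW SB : Matrix (Fin d) (Fin d) ℝ)
    (hW : SW.IsHermitian) (hB : SB.IsHermitian)
    (hM : (NormedSpace.exp (-((1 / 2 : ℝ) • SW)) * NormedSpace.exp SB *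
        NormedSpace.exp (-((1 / 2 : ℝ) • SW))).IsHermitian)
    (ν μ lam : Fin d → ℝ)
    (hν : Antitone ν) (hμ : Antitone μ) (hlam : Antitone lam)
    (hνe : ∃ σ : Equiv.Perm (Fin d), ν = hW.eigenvalues ∘ σ)
    (hμe : ∃ σ : Equiv.Perm (Fin d), μ = hB.eigenvalues ∘ σ)
    (hlame : ∃ σ : Equiv.Perm (Fin d), lam = hM.eigenvalues ∘ σ)
    (i : Fin d) :
    Real.exp (μ i - ν ⟨0, i.pos⟩) ≤ lam i ∧
      lam i ≤ Real.exp (μ i - ν ⟨d - 1, Nat.sub_lt i.pos Nat.one_pos⟩) := by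
  have hspec : spectrum ℝ SW ⊆
      Set.Icc (ν ⟨d - 1, Nat.sub_lt i.pos Nat.one_pos⟩) (ν ⟨0, i.pos⟩) := by
    obtain ⟨σ, hσ⟩ := hνe
    rw [hW.spectrum_real_eq_range_eigenvalues, ← EquivLike.range_comp _ σ, ← hσ]
    rintro _ ⟨k, rfl⟩
    exact ⟨hν (Nat.le_sub_one_of_lt k.isLt), hν (Nat.zero_le _)⟩
  rw [← congrFun (hM.eigenvalues₀_comp_finCongr hlam hlame) i,
    ← congrFun (hB.eigenvalues₀_comp_finCongr hμ hμe) i]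
  exact hW.eigenvalues₀_exp_conj_bounds hB hspec hM _
end

section
/- Let S_W, S_B be real symmetric d×d matrices with eigenvalues ν_1 ≥ ... ≥ ν_d and μ_1 ≥ ... ≥ μ_d respectively, and let λ_1(M) ≥ ... ≥ λ_d(M) be the eigenvalues of M = exp(−S_W/2)·exp(S_B)·exp(−S_W/2). Then for each i, exp(μ_d − ν_{d−i+1}) ≤ λ_i(M) ≤ exp(μ_1 − ν_{d−i+1}). -/
/-!
Conjugating `exp μ_d ≤ exp S_B ≤ exp μ_1` (Loewner order) by the symmetric matrix `exp (−S_W/2)`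
sandwiches `M` between `exp μ_d • exp (−S_W)` and `exp μ_1 • exp (−S_W)`, whose `i`-th largest
eigenvalues are `exp (μ_d − ν_{d−i+1})` and `exp (μ_1 − ν_{d−i+1})`. The `i`-th largest eigenvalue
is monotone in the Loewner order (Courant–Fischer): counting dimensions, some `x ≠ 0` lies in the
span of the top `i` eigenvectors of `A` and of the bottom `d − i + 1` eigenvectors of `B`, and
comparing `⟪x, A x⟫ ≤ ⟪x, B x⟫` on it gives `λ_i(A) ≤ λ_i(B)`.
-/

open Matrix
open scoped RealInnerProductSpace MatrixOrder

namespace OrthonormalBasis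

variable {E : Type*} [NormedAddCommGroup E] [InnerProductSpace ℝ E]

section Eigenbasis

variable {ι : Type*} [Fintype ι] (b : OrthonormalBasis ι ℝ E) {T : E →ₗ[ℝ] E}
  {w : ι → ℝ}

theorem norm_sq_eq_sum_sq_repr (x : E) : ‖x‖ ^ 2 = ∑ j, b.repr x j ^ 2 := by
  simp [← b.sum_sq_norm_inner_right x, b.repr_apply_apply]

theorem inner_map_self_eq_sum_mul_sq_repr (hT : ∀ j, T (b j) = w j • b j) (x : E) :
    ⟪x, T x⟫ = ∑ j, w j * b.repr x j ^ 2 := by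
  have hTx : T x = ∑ j, (w j * b.repr x j) • b j := by
    conv_lhs => rw [← b.sum_repr x]
    simp [hT, smul_smul, mul_comm]
  simp [hTx, inner_sum, inner_smul_right, real_inner_comm, b.repr_apply_apply, sq, mul_assoc]

theorem inner_map_self_le_mul_norm_sq (hT : ∀ j, T (b j) = w j • b j) {x : E} {C : ℝ}
    (hC : ∀ j, b.repr x j ≠ 0 → w j ≤ C) : ⟪x, T x⟫ ≤ C * ‖x‖ ^ 2 := by
  rw [b.inner_map_self_eq_sum_mul_sq_repr hT, b.norm_sq_eq_sum_sq_repr, Finset.mul_sum]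
  refine Finset.sum_le_sum fun j _ => ?_
  by_cases hj : b.repr x j = 0
  · simp [hj]
  · exact mul_le_mul_of_nonneg_right (hC j hj) (sq_nonneg _)

theorem mul_norm_sq_le_inner_map_self (hT : ∀ j, T (b j) = w j • b j) {x : E} {C : ℝ}
    (hC : ∀ j, b.repr x j ≠ 0 → C ≤ w j) : C * ‖x‖ ^ 2 ≤ ⟪x, T x⟫ := by
  rw [b.inner_map_self_eq_sum_mul_sq_repr hT, b.norm_sq_eq_sum_sq_repr, Finset.mul_sum]
  refine Finset.sum_le_sum fun j _ => ?_
  by_cases hj : b.repr x j = 0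
  · simp [hj]
  · exact mul_le_mul_of_nonneg_right (hC j hj) (sq_nonneg _)

end Eigenbasis

variable {n : ℕ}

theorem exists_ne_zero_repr_eq_zero (b c : OrthonormalBasis (Fin n) ℝ E) (i : Fin n) :
    ∃ x ≠ 0, (∀ j, i < j → b.repr x j = 0) ∧ (∀ j, j < i → c.repr x j = 0) := by
  let f : E →ₗ[ℝ] ({j // i < j} ⊕ {j // j < i} → ℝ) :=
    LinearMap.pi <| Sum.elim (fun j => innerₛₗ ℝ (b j)) (fun j => innerₛₗ ℝ (c j))
  have : FiniteDimensional ℝ E := b.toBasis.finiteDimensional_of_finite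
  have hdim :
      Module.finrank ℝ ({j // i < j} ⊕ {j // j < i} → ℝ) < Module.finrank ℝ E := by
    have := i.isLt
    simp only [Module.finrank_fintype_fun_eq_card, Module.finrank_eq_card_basis b.toBasis,
      Fintype.card_fin, Fintype.card_sum, Fintype.card_subtype, Finset.filter_lt_eq_Ioi,
      Finset.filter_gt_eq_Iio, Fin.card_Ioi, Fin.card_Iio]
    omega
  obtain ⟨x, hx, hx0⟩ :=
    (Submodule.ne_bot_iff _).mp (LinearMap.ker_ne_bot_of_finrank_lt (f := f) hdim)
  have hfx := LinearMap.mem_ker.mp hx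
  refine ⟨x, hx0, fun j hj => ?_, fun j hj => ?_⟩
  · exact (b.repr_apply_apply x j).trans (congr_fun hfx (.inl ⟨j, hj⟩))
  · exact (c.repr_apply_apply x j).trans (congr_fun hfx (.inr ⟨j, hj⟩))

end OrthonormalBasis

theorem eigenvalue_le_of_inner_map_self_le {E : Type*} [NormedAddCommGroup E]
    [InnerProductSpace ℝ E] {n : ℕ} {T S : E →ₗ[ℝ] E} {b c : OrthonormalBasis (Fin n) ℝ E}
    {w t : Fin n → ℝ} (hT : ∀ j, T (b j) = w j • b j) (hS : ∀ j, S (c j) = t j • c j)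
    (hw : Antitone w) (ht : Antitone t) (hTS : ∀ x, ⟪x, T x⟫ ≤ ⟪x, S x⟫) (i : Fin n) :
    w i ≤ t i := by
  obtain ⟨x, hx0, hbx, hcx⟩ := b.exists_ne_zero_repr_eq_zero c i
  have hT_ge : w i * ‖x‖ ^ 2 ≤ ⟪x, T x⟫ :=
    b.mul_norm_sq_le_inner_map_self hT fun j hj => hw (not_lt.mp (mt (hbx j) hj))
  have hS_le : ⟪x, S x⟫ ≤ t i * ‖x‖ ^ 2 :=
    c.inner_map_self_le_mul_norm_sq hS fun j hj => ht (not_lt.mp (mt (hcx j) hj))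
  exact le_of_mul_le_mul_right ((hT_ge.trans (hTS x)).trans hS_le) (by positivity)

section StarOrderedAlgebra

variable {A : Type*} [Semiring A] [StarRing A] [PartialOrder A] [StarOrderedRing A]
  [Algebra ℝ A] {a : A} {r : ℝ}

theorem smul_star_mul_self_le_star_mul_mul (h : algebraMap ℝ A r ≤ a) (c : A) :
    r • (star c * c) ≤ star c * a * c := by
  simpa [Algebra.algebraMap_eq_smul_one, smul_mul_assoc, mul_smul_comm] using
    star_left_conjugate_le_conjugate h c

theorem star_mul_mul_le_smul_star_mul_self (h : a ≤ algebraMap ℝ A r) (c : A) :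
    star c * a * c ≤ r • (star c * c) := by
  simpa [Algebra.algebraMap_eq_smul_one, smul_mul_assoc, mul_smul_comm] using
    star_left_conjugate_le_conjugate h c

end StarOrderedAlgebra

namespace Matrix

theorem eigenvalue_le_of_le {n : ℕ} {A B : Matrix (Fin n) (Fin n) ℝ} (hAB : A ≤ B)
    {b c : OrthonormalBasis (Fin n) ℝ (EuclideanSpace ℝ (Fin n))} {w t : Fin n → ℝ}
    (hb : ∀ j, A *ᵥ b j = w j • b j) (hc : ∀ j, B *ᵥ c j = t j • c j)
    (hw : Antitone w) (ht : Antitone t) (i : Fin n) : w i ≤ t i := by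
  refine eigenvalue_le_of_inner_map_self_le (T := toEuclideanLin A) (S := toEuclideanLin B)
    (b := b) (c := c) (fun j => ?_) (fun j => ?_) hw ht (fun x => ?_) i
  · simp [toLpLin_apply, hb]
  · simp [toLpLin_apply, hc]
  · have := (le_iff.mp hAB).dotProduct_mulVec_nonneg x
    simp only [toLpLin_apply, EuclideanSpace.inner_eq_star_dotProduct, star_trivial,
      sub_mulVec, dotProduct_sub] at this ⊢
    rw [dotProduct_comm, dotProduct_comm (B *ᵥ _)]
    linarith

variable {n : Type*} [Fintype n] [DecidableEq n]

theorem IsHermitian.cfc_mulVec_eigenvectorBasis {𝕜 : Type*} [RCLike 𝕜] {A : Matrix n n 𝕜}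
    (hA : A.IsHermitian) (f : ℝ → ℝ) (j : n) :
    cfc f A *ᵥ hA.eigenvectorBasis j = (f (hA.eigenvalues j) : 𝕜) • hA.eigenvectorBasis j := by
  rw [hA.cfc_eq, IsHermitian.cfc, Unitary.conjStarAlgAut_apply, ← mulVec_mulVec, ← mulVec_mulVec,
    star_eigenvectorUnitary_mulVec, diagonal_mulVec_single, mul_one,
    ← eigenvectorUnitary_mulVec, ← mulVec_smul, ← Pi.single_smul', smul_eq_mul, mul_one]
  rfl

theorem IsHermitian.exp_eq_cfc_s8 {A : Matrix n n ℝ} (hA : A.IsHermitian) :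
    NormedSpace.exp A = cfc Real.exp A := by
  -- `NormedSpace.exp` does not depend on the norm; the L2 operator norm makes matrices a
  -- C⋆-algebra, where `cfc Real.exp` is known to agree with it.
  open scoped Matrix.Norms.L2Operator in
  exact (CFC.real_exp_eq_normedSpace_exp hA).symm

theorem IsHermitian.algebraMap_exp_le_exp {A : Matrix n n ℝ} (hA : A.IsHermitian) {r : ℝ}
    (hr : ∀ j, r ≤ hA.eigenvalues j) : algebraMap ℝ _ (Real.exp r) ≤ NormedSpace.exp A := by
  rw [hA.exp_eq_cfc_s8]
  refine algebraMap_le_cfc _ _ _ fun x hx => ?_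
  rw [hA.spectrum_real_eq_range_eigenvalues] at hx
  obtain ⟨j, rfl⟩ := hx
  exact Real.exp_le_exp.mpr (hr j)

theorem IsHermitian.exp_le_algebraMap_exp {A : Matrix n n ℝ} (hA : A.IsHermitian) {r : ℝ}
    (hr : ∀ j, hA.eigenvalues j ≤ r) : NormedSpace.exp A ≤ algebraMap ℝ _ (Real.exp r) := by
  rw [hA.exp_eq_cfc_s8]
  refine cfc_le_algebraMap _ _ _ fun x hx => ?_
  rw [hA.spectrum_real_eq_range_eigenvalues] at hx
  obtain ⟨j, rfl⟩ := hx
  exact Real.exp_le_exp.mpr (hr j)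

theorem IsHermitian.exp_neg_mulVec_eigenvectorBasis {A : Matrix n n ℝ} (hA : A.IsHermitian)
    (j : n) :
    NormedSpace.exp (-A) *ᵥ hA.eigenvectorBasis j =
      Real.exp (-hA.eigenvalues j) • hA.eigenvectorBasis j := by
  rw [hA.neg.exp_eq_cfc_s8, ← cfc_comp_neg Real.exp A, hA.cfc_mulVec_eigenvectorBasis]
  rfl

theorem exp_neg_half_smul_mul_self (A : Matrix n n ℝ) :
    NormedSpace.exp (-((1 / 2 : ℝ) • A)) * NormedSpace.exp (-((1 / 2 : ℝ) • A)) =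
      NormedSpace.exp (-A) := by
  rw [← exp_add_of_commute _ _ (.refl _)]
  congr 1
  module

theorem smul_exp_neg_le_conj_exp {S B : Matrix n n ℝ} (hS : S.IsHermitian) (hB : B.IsHermitian)
    {r : ℝ} (hr : ∀ j, r ≤ hB.eigenvalues j) :
    Real.exp r • NormedSpace.exp (-S) ≤
      NormedSpace.exp (-((1 / 2 : ℝ) • S)) * NormedSpace.exp B *
        NormedSpace.exp (-((1 / 2 : ℝ) • S)) := by
  have hE := ((hS.smul (IsSelfAdjoint.all (1 / 2 : ℝ))).neg).exp
  simpa only [← exp_neg_half_smul_mul_self S, star_eq_conjTranspose, hE.eq] using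
    smul_star_mul_self_le_star_mul_mul (hB.algebraMap_exp_le_exp hr)
      (NormedSpace.exp (-((1 / 2 : ℝ) • S)))

theorem conj_exp_le_smul_exp_neg {S B : Matrix n n ℝ} (hS : S.IsHermitian) (hB : B.IsHermitian)
    {r : ℝ} (hr : ∀ j, hB.eigenvalues j ≤ r) :
    NormedSpace.exp (-((1 / 2 : ℝ) • S)) * NormedSpace.exp B *
        NormedSpace.exp (-((1 / 2 : ℝ) • S)) ≤
      Real.exp r • NormedSpace.exp (-S) := by
  have hE := ((hS.smul (IsSelfAdjoint.all (1 / 2 : ℝ))).neg).exp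
  simpa only [← exp_neg_half_smul_mul_self S, star_eq_conjTranspose, hE.eq] using
    star_mul_mul_le_smul_star_mul_self (hB.exp_le_algebraMap_exp hr)
      (NormedSpace.exp (-((1 / 2 : ℝ) • S)))

end Matrix

/-- Eigenvalue bounds: with `ν`, `μ`, `lam` the decreasingly-ordered eigenvalues of
`S_W`, `S_B` and `M = exp(−S_W/2)·exp(S_B)·exp(−S_W/2)` respectively, one has
`exp(μ_d − ν_{d−i+1}) ≤ λ_i(M) ≤ exp(μ_1 − ν_{d−i+1})`.  (In 0-based indexing the
index `d−i+1` is `i.rev`.) -/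
theorem eigenvalue_bounds_two {d : ℕ} (SW SB : Matrix (Fin d) (Fin d) ℝ)
    (hW : SW.IsHermitian) (hB : SB.IsHermitian)
    (hM : (NormedSpace.exp (-((1 / 2 : ℝ) • SW)) * NormedSpace.exp SB *
        NormedSpace.exp (-((1 / 2 : ℝ) • SW))).IsHermitian)
    (ν μ lam : Fin d → ℝ)
    (hν : Antitone ν) (hμ : Antitone μ) (hlam : Antitone lam)
    (hνe : ∃ σ : Equiv.Perm (Fin d), ν = hW.eigenvalues ∘ σ)
    (hμe : ∃ σ : Equiv.Perm (Fin d), μ = hB.eigenvalues ∘ σ)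
    (hlame : ∃ σ : Equiv.Perm (Fin d), lam = hM.eigenvalues ∘ σ)
    (i : Fin d) :
    Real.exp (μ ⟨d - 1, Nat.sub_lt i.pos Nat.one_pos⟩ - ν i.rev) ≤ lam i ∧
      lam i ≤ Real.exp (μ ⟨0, i.pos⟩ - ν i.rev) := by
  obtain ⟨σW, rfl⟩ := hνe
  obtain ⟨σB, rfl⟩ := hμe
  obtain ⟨σM, rfl⟩ := hlame
  set M := NormedSpace.exp (-((1 / 2 : ℝ) • SW)) * NormedSpace.exp SB *
    NormedSpace.exp (-((1 / 2 : ℝ) • SW))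
  have hμ_bounds (j : Fin d) : hB.eigenvalues (σB ⟨d - 1, Nat.sub_lt i.pos Nat.one_pos⟩) ≤
      hB.eigenvalues j ∧ hB.eigenvalues j ≤ hB.eigenvalues (σB ⟨0, i.pos⟩) := by
    obtain ⟨k, rfl⟩ := σB.surjective j
    exact ⟨hμ (Nat.le_sub_one_of_lt k.isLt), hμ (Nat.zero_le _)⟩
  set bW := hW.eigenvectorBasis.reindex (Fin.revPerm.trans σW).symm
  have hbW (r : ℝ) (j : Fin d) : (Real.exp r • NormedSpace.exp (-SW)) *ᵥ bW j =
      (Real.exp r * Real.exp (-hW.eigenvalues (σW j.rev))) • bW j := by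
    simp [bW, smul_mulVec, hW.exp_neg_mulVec_eigenvectorBasis, smul_smul]
  have hbW_anti (r : ℝ) :
      Antitone fun j : Fin d => Real.exp r * Real.exp (-hW.eigenvalues (σW j.rev)) := by
    intro j k hjk
    dsimp only
    gcongr
    exact hν (Fin.rev_le_rev.mpr hjk)
  set bM := hM.eigenvectorBasis.reindex σM.symm
  have hbM (j : Fin d) : M *ᵥ bM j = hM.eigenvalues (σM j) • bM j := by
    simp only [bM, OrthonormalBasis.reindex_apply, Equiv.symm_symm]
    exact hM.mulVec_eigenvectorBasis _
  simp only [Function.comp_apply, sub_eq_add_neg, Real.exp_add]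
  exact ⟨eigenvalue_le_of_le (smul_exp_neg_le_conj_exp hW hB fun j => (hμ_bounds j).1)
      (hbW _) hbM (hbW_anti _) hlam i,
    eigenvalue_le_of_le (conj_exp_le_smul_exp_neg hW hB fun j => (hμ_bounds j).2)
      hbM (hbW _) hlam (hbW_anti _) i⟩
end

section
/- Let A be a d×d real symmetric positive semidefinite matrix and B a d×d real symmetric positive definite matrix, and let X ∈ ℝ^{d×t} have rank t. Then tr(X^T A X (X^T B X)^{-1}) ≤ Σ_{i=1}^t λ_i(B^{-1}A), where λ_1(B^{-1}A) ≥ ... ≥ λ_d(B^{-1}A) are the eigenvalues of B^{-1}A in decreasing order. -/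
open Matrix Polynomial

/-!
Write `B = S * S` with `S` symmetric and invertible, and put `Y = S X`, `M = S⁻¹ A S⁻¹`. Then
`Xᵀ A X (Xᵀ B X)⁻¹` has the same trace as `M P`, where `P = Y (Yᵀ Y)⁻¹ Yᵀ` is the orthogonal
projection onto the column space of `Y`, of trace `t`; and `M` is symmetric with the same
characteristic polynomial as `B⁻¹ A = S⁻¹ (S⁻¹ A)`. In an orthonormal eigenbasis of `M`,
`tr (M P) = ∑ μᵢ qᵢ` with `qᵢ` the diagonal of the conjugated projection, so `qᵢ ∈ [0, 1]` and
`∑ qᵢ = t`. Splitting `μᵢ qᵢ ≤ L qᵢ + (μᵢ - L)⁺` at the `(t+1)`-st largest eigenvalue `L`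
(any lower bound if `t = d`) bounds such a sum by the sum of the `t` largest eigenvalues.
-/

open Finset in
theorem Finset.sum_mul_le_sum_of_threshold {ι : Type*} [Fintype ι] {s : Finset ι}
    {lam mu c : ι → ℝ} {L : ℝ} (hs : ∀ i ∈ s, L ≤ lam i) (hsc : ∀ i ∉ s, lam i ≤ L)
    (hmu : univ.val.map mu = univ.val.map lam) (hc : ∀ i, c i ∈ Set.Icc 0 1)
    (hsum : ∑ i, c i = #s) :
    ∑ i, mu i * c i ≤ ∑ i ∈ s, lam i := by
  have hpos (f : ι → ℝ) : ∑ i, max (f i - L) 0 = ((univ.val.map f).map (max (· - L) 0)).sum := by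
    rw [Multiset.map_map, Finset.sum_map_val]; rfl
  calc ∑ i, mu i * c i ≤ ∑ i, (L * c i + max (mu i - L) 0) := by
        refine sum_le_sum fun i _ => ?_
        have := calc (mu i - L) * c i ≤ max (mu i - L) 0 * c i :=
              mul_le_mul_of_nonneg_right (le_max_left _ _) (hc i).1
          _ ≤ max (mu i - L) 0 := mul_le_of_le_one_right (le_max_right _ _) (hc i).2
        linarith
    _ = L * #s + ∑ i, max (lam i - L) 0 := by
        rw [sum_add_distrib, ← mul_sum, hsum, hpos, hmu, ← hpos]
    _ = L * #s + ∑ i ∈ s, (lam i - L) := by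
        rw [← sum_subset (subset_univ s) fun i _ hi => max_eq_right (by linarith [hsc i hi])]
        exact congrArg _ (sum_congr rfl fun i hi => max_eq_left (by linarith [hs i hi]))
    _ = ∑ i ∈ s, lam i := by
        rw [sum_sub_distrib, sum_const, nsmul_eq_mul]; ring

open Finset in
theorem Fin.sum_mul_le_sum_filter_lt {d t : ℕ} {lam mu c : Fin d → ℝ} (hlam : Antitone lam)
    (hmu : univ.val.map mu = univ.val.map lam) (hc : ∀ i, c i ∈ Set.Icc 0 1)
    (hsum : ∑ i, c i = t) :
    ∑ i, mu i * c i ≤ ∑ i ∈ univ.filter (fun i : Fin d => (i : ℕ) < t), lam i := by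
  have htd : t ≤ d := by
    have : ∑ i, c i ≤ d := by
      simpa using sum_le_sum fun i (_ : i ∈ univ) => (hc i).2
    exact_mod_cast hsum ▸ this
  obtain ⟨L, hs, hsc⟩ : ∃ L, (∀ i : Fin d, (i : ℕ) < t → L ≤ lam i) ∧
      ∀ i : Fin d, ¬ (i : ℕ) < t → lam i ≤ L := by
    rcases htd.lt_or_eq with htd | rfl
    · exact ⟨lam ⟨t, htd⟩, fun i hi => hlam (Fin.mk_le_of_le_val hi.le),
        fun i hi => hlam (Fin.le_iff_val_le_val.2 (not_lt.1 hi))⟩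
    · obtain ⟨L, hL⟩ := (Set.finite_range lam).bddBelow
      exact ⟨L, fun i _ => hL ⟨i, rfl⟩, fun i hi => absurd i.2 hi⟩
  refine sum_mul_le_sum_of_threshold (by simpa using hs) (by simpa using hsc) hmu hc ?_
  rw [hsum, Fin.card_filter_val_lt, min_eq_right htd]

namespace Matrix

theorem diag_mem_Icc_of_isIdempotentElem {n : Type*} [Fintype n] {Q : Matrix n n ℝ}
    (hQ : Q.IsSymm) (hQQ : IsIdempotentElem Q) (i : n) : Q i i ∈ Set.Icc 0 1 := by
  have hsq : Q i i = ∑ j, Q i j ^ 2 := by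
    conv_lhs => rw [← hQQ.eq, mul_apply]
    exact Finset.sum_congr rfl fun j _ => by rw [hQ.apply i j, sq]
  have hle : Q i i ^ 2 ≤ Q i i := by
    conv_rhs => rw [hsq]
    exact Finset.single_le_sum (fun j _ => sq_nonneg (Q i j)) (Finset.mem_univ i)
  have hnonneg : 0 ≤ Q i i := hsq ▸ Finset.sum_nonneg fun j _ => sq_nonneg _
  exact ⟨hnonneg, by nlinarith⟩

theorem IsHermitian.trace_mul_le_sum_filter_lt {d t : ℕ} {M P : Matrix (Fin d) (Fin d) ℝ}
    (hM : M.IsHermitian) (hP : P.IsSymm) (hPP : IsIdempotentElem P) (htr : P.trace = t)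
    {lam : Fin d → ℝ} (hlam : Antitone lam) (hchar : M.charpoly = ∏ i, (X - C (lam i))) :
    (M * P).trace ≤ ∑ i ∈ Finset.univ.filter (fun i : Fin d => (i : ℕ) < t), lam i := by
  set U : Matrix (Fin d) (Fin d) ℝ := (hM.eigenvectorUnitary : Matrix (Fin d) (Fin d) ℝ)
  have hUU : U * star U = 1 := Unitary.coe_mul_star_self _
  have hUT : star U = Uᵀ := rfl
  set Q := star U * P * U
  set μ := hM.eigenvalues
  have hMU : M = U * diagonal μ * star U := by simpa using hM.spectral_theorem
  have htrace : (M * P).trace = ∑ i, μ i * Q i i := by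
    rw [hMU, mul_assoc, mul_assoc, trace_mul_comm]
    simp [Q, trace, diagonal_mul, mul_assoc]
  have hQ : Q.IsSymm := by
    simp only [Q, IsSymm, transpose_mul, hUT, transpose_transpose, hP.eq, mul_assoc]
  have hQQ : IsIdempotentElem Q := by
    simp only [Q, IsIdempotentElem, mul_assoc]
    rw [← mul_assoc U, hUU, one_mul, ← mul_assoc P, hPP.eq]
  have hsum : ∑ i, Q i i = t := by
    change Q.trace = t
    rw [trace_mul_cycle, hUU, one_mul, htr]
  have hmu : Finset.univ.val.map μ = Finset.univ.val.map lam := by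
    have := congrArg roots (hM.charpoly_eq.symm.trans hchar)
    simpa [roots_prod, Finset.prod_ne_zero_iff, X_sub_C_ne_zero] using this
  rw [htrace]
  exact Fin.sum_mul_le_sum_filter_lt hlam hmu (diag_mem_Icc_of_isIdempotentElem hQ hQQ) hsum

theorem mulVec_injective_of_rank_eq {m n K : Type*} [Fintype n] [Field K] {X : Matrix m n K}
    (hX : X.rank = Fintype.card n) : Function.Injective X.mulVec := by
  have hker := LinearMap.finrank_range_add_finrank_ker X.mulVecLin
  rw [← rank, hX, Module.finrank_fintype_fun_eq_card, Nat.add_eq_left,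
    Submodule.finrank_eq_zero] at hker
  exact LinearMap.ker_eq_bot.1 hker

open scoped MatrixOrder in
theorem PosDef.exists_isSymm_mul_self_eq {n : Type*} [Fintype n] [DecidableEq n]
    {B : Matrix n n ℝ} (hB : B.PosDef) : ∃ S : Matrix n n ℝ, S.IsSymm ∧ IsUnit S ∧ S * S = B :=
  ⟨CFC.sqrt B, (CFC.sqrt_nonneg B).posSemidef.1,
    (CFC.isUnit_sqrt_iff B hB.posSemidef.nonneg).2 hB.isUnit,
    CFC.sqrt_mul_sqrt_self B hB.posSemidef.nonneg⟩

section colSpanProj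

variable {m k : Type*} [Fintype m] [Fintype k] [DecidableEq k]

noncomputable def colSpanProj (Y : Matrix m k ℝ) : Matrix m m ℝ := Y * (Yᵀ * Y)⁻¹ * Yᵀ

theorem isSymm_colSpanProj (Y : Matrix m k ℝ) : (colSpanProj Y).IsSymm := by
  simp only [colSpanProj, IsSymm, transpose_mul, transpose_nonsing_inv, transpose_transpose,
    Matrix.mul_assoc]

theorem isIdempotentElem_colSpanProj {Y : Matrix m k ℝ} (hY : IsUnit (Yᵀ * Y).det) :
    IsIdempotentElem (colSpanProj Y) := by
  simp only [colSpanProj, IsIdempotentElem, Matrix.mul_assoc]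
  rw [← Matrix.mul_assoc Yᵀ Y, nonsing_inv_mul_cancel_left _ _ hY]

theorem trace_colSpanProj {Y : Matrix m k ℝ} (hY : IsUnit (Yᵀ * Y).det) :
    (colSpanProj Y).trace = Fintype.card k := by
  rw [colSpanProj, trace_mul_cycle, mul_nonsing_inv _ hY, trace_one]

theorem trace_transpose_mul_mul_mul_inv (M : Matrix m m ℝ) (Y : Matrix m k ℝ) :
    (Yᵀ * M * Y * (Yᵀ * Y)⁻¹).trace = (M * colSpanProj Y).trace := by
  rw [colSpanProj, trace_mul_comm M, Matrix.mul_assoc (Yᵀ * M), trace_mul_comm]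
  simp only [Matrix.mul_assoc]

end colSpanProj

end Matrix

/-- Upper trace bound: for `A` PSD, `B` PD and `X` of full column rank `t`,
`tr(Xᵀ A X (Xᵀ B X)⁻¹) ≤ Σ_{i=1}^t λ_i(B⁻¹A)`, where `lam` lists the eigenvalues of
`B⁻¹ A` (with multiplicity, via the characteristic polynomial) in decreasing order. -/
theorem trace_ratio_upper_bound {d t : ℕ} (A B : Matrix (Fin d) (Fin d) ℝ)
    (X : Matrix (Fin d) (Fin t) ℝ)
    (hA : A.PosSemidef) (hB : B.PosDef) (hX : X.rank = t)
    (lam : Fin d → ℝ) (hlam : Antitone lam)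
    (hchar : (B⁻¹ * A).charpoly
      = ∏ i : Fin d, (Polynomial.X - Polynomial.C (lam i))) :
    (Xᵀ * A * X * (Xᵀ * B * X)⁻¹).trace
      ≤ ∑ i ∈ Finset.univ.filter (fun i : Fin d => (i : ℕ) < t), lam i := by
  have hW : (Xᵀ * B * X).PosDef := by
    simpa using hB.conjTranspose_mul_mul_same (mulVec_injective_of_rank_eq (by simpa using hX))
  obtain ⟨S, hST, hS, rfl⟩ := hB.exists_isSymm_mul_self_eq
  have hSdet : IsUnit S.det := (isUnit_iff_isUnit_det S).1 hS
  set Y := S * X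
  set M := S⁻¹ * A * S⁻¹
  have hM : M.IsHermitian := by
    simpa [M, transpose_nonsing_inv, hST.eq] using isHermitian_conjTranspose_mul_mul S⁻¹ hA.1
  have hYY : Yᵀ * Y = Xᵀ * (S * S) * X := by
    simp only [Y, transpose_mul, hST.eq, Matrix.mul_assoc]
  have hYMY : Yᵀ * M * Y = Xᵀ * A * X := by
    simp only [Y, M, transpose_mul, hST.eq, Matrix.mul_assoc,
      mul_nonsing_inv_cancel_left _ _ hSdet, nonsing_inv_mul_cancel_left _ _ hSdet]
  have hcharM : M.charpoly = ((S * S)⁻¹ * A).charpoly := by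
    rw [Matrix.mul_inv_rev, Matrix.mul_assoc, charpoly_mul_comm]
  have hYdet : IsUnit (Yᵀ * Y).det := hYY ▸ isUnit_iff_ne_zero.2 hW.det_pos.ne'
  rw [← hYMY, ← hYY, trace_transpose_mul_mul_mul_inv]
  exact hM.trace_mul_le_sum_filter_lt (isSymm_colSpanProj Y) (isIdempotentElem_colSpanProj hYdet)
    (by rw [trace_colSpanProj hYdet, Fintype.card_fin]) hlam (hcharM.trans hchar)
end

section
/- Let V, Ṽ ∈ ℝ^{d×t} have orthonormal columns, and let x, y ∈ ℝ^d with ‖x‖₂ = ‖y‖₂ = 1. Define d₁ = ‖V^T(x−y)‖₂, d₂ = ‖Ṽ^T(x−y)‖₂, c = ‖V^T Ṽ‖₂ (spectral norm), and s = ‖(I − V V^T) Ṽ‖₂. Then d₁ ≤ d₂·c + 2s. -/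
/-!
Since `Vᵀ = (VᵀW) Wᵀ + Vᵀ (1 - W Wᵀ)` and `‖x - y‖ ≤ 2`, it suffices to show
`‖(1 - W Wᵀ) V‖ ≤ ‖(1 - V Vᵀ) W‖`. With `M = VᵀW`, Pythagoras gives
`‖(1 - V Vᵀ) W v‖² = ‖v‖² - ‖M v‖²` and `‖(1 - W Wᵀ) V u‖² = ‖u‖² - ‖Mᵀ u‖²`, so the claim
reduces to: `MᵀM ≥ c • 1` implies `MMᵀ ≥ c • 1` for a square matrix `M`. For `c > 0`, `M` is injective,
hence surjective; writing `u = M w`, Cauchy–Schwarz applied to `‖u‖² = ⟪Mᵀ u, w⟫` gives the bound.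
-/

open Matrix
open scoped Matrix.Norms.L2Operator

noncomputable def vecEnorm {m : ℕ} (v : Fin m → ℝ) : ℝ :=
  ‖(WithLp.equiv 2 (Fin m → ℝ)).symm v‖

open WithLp

namespace Matrix

variable {m n : Type*} [Fintype m] [Fintype n]

lemma dotProduct_self_nonneg (v : n → ℝ) : 0 ≤ v ⬝ᵥ v := by
  simpa using dotProduct_star_self_nonneg v

lemma dotProduct_sq_le_dotProduct_self_mul (u w : n → ℝ) :
    (u ⬝ᵥ w) ^ 2 ≤ (u ⬝ᵥ u) * (w ⬝ᵥ w) := by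
  simpa [dotProduct, sq] using Finset.sum_mul_sq_le_sq_mul_sq Finset.univ u w

lemma mulVec_dotProduct_mulVec_eq (A : Matrix m n ℝ) (v : n → ℝ) :
    A *ᵥ v ⬝ᵥ A *ᵥ v = v ⬝ᵥ (Aᵀ * A) *ᵥ v := by
  rw [← mulVec_mulVec, dotProduct_mulVec v Aᵀ, vecMul_transpose]

lemma le_transpose_mulVec_dotProduct_of_le_mulVec_dotProduct [DecidableEq n]
    (M : Matrix n n ℝ) {c : ℝ} (h : ∀ v, c * (v ⬝ᵥ v) ≤ M *ᵥ v ⬝ᵥ M *ᵥ v) (u : n → ℝ) :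
    c * (u ⬝ᵥ u) ≤ Mᵀ *ᵥ u ⬝ᵥ Mᵀ *ᵥ u := by
  have hMu := dotProduct_self_nonneg (Mᵀ *ᵥ u)
  rcases le_or_gt c 0 with hc | hc
  · nlinarith [dotProduct_self_nonneg u]
  have hinj : Function.Injective M.mulVec := by
    refine (injective_iff_map_eq_zero M.mulVecLin).mpr fun v hv => ?_
    have hv' := h v
    rw [mulVecLin_apply] at hv
    rw [hv, zero_dotProduct] at hv'
    exact dotProduct_self_eq_zero.mp
      (le_antisymm (nonpos_of_mul_nonpos_right hv' hc) (dotProduct_self_nonneg v))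
  obtain ⟨w, rfl⟩ := mulVec_surjective_iff_isUnit.mpr (mulVec_injective_iff_isUnit.mp hinj) u
  have hcs := dotProduct_sq_le_dotProduct_self_mul (Mᵀ *ᵥ M *ᵥ w) w
  have hMw : M *ᵥ w ⬝ᵥ M *ᵥ w = Mᵀ *ᵥ M *ᵥ w ⬝ᵥ w := by
    rw [dotProduct_mulVec, mulVec_transpose]
  rw [← hMw] at hcs
  have hw := h w
  set a := M *ᵥ w ⬝ᵥ M *ᵥ w
  set b := Mᵀ *ᵥ M *ᵥ w ⬝ᵥ Mᵀ *ᵥ M *ᵥ w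
  rcases (show 0 ≤ a from dotProduct_self_nonneg _).eq_or_lt with ha | ha
  · rw [← ha, mul_zero]
    exact hMu
  have hab : a * (c * a) ≤ a * b := by
    nlinarith [mul_le_mul_of_nonneg_left hw hMu, mul_le_mul_of_nonneg_left hcs hc.le]
  exact le_of_mul_le_mul_left hab ha

lemma norm_toLp_sq_eq_dotProduct (v : n → ℝ) : ‖toLp 2 v‖ ^ 2 = v ⬝ᵥ v := by
  simp [EuclideanSpace.real_norm_sq_eq (toLp 2 v), dotProduct, sq]

section L2OpNorm

variable [DecidableEq n]

lemma norm_toLp_mulVec_le (A : Matrix m n ℝ) (v : n → ℝ) :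
    ‖toLp 2 (A *ᵥ v)‖ ≤ ‖A‖ * ‖toLp 2 v‖ := by
  simpa using A.l2_opNorm_mulVec (toLp 2 v)

lemma mulVec_dotProduct_mulVec_le (A : Matrix m n ℝ) (v : n → ℝ) :
    A *ᵥ v ⬝ᵥ A *ᵥ v ≤ ‖A‖ ^ 2 * (v ⬝ᵥ v) := by
  rw [← norm_toLp_sq_eq_dotProduct, ← norm_toLp_sq_eq_dotProduct, ← mul_pow]
  exact pow_le_pow_left₀ (norm_nonneg _) (norm_toLp_mulVec_le A v) 2

lemma l2_opNorm_le_of_mulVec_dotProduct_le (A : Matrix m n ℝ) {c : ℝ} (hc : 0 ≤ c)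
    (h : ∀ v, A *ᵥ v ⬝ᵥ A *ᵥ v ≤ c ^ 2 * (v ⬝ᵥ v)) : ‖A‖ ≤ c := by
  refine ContinuousLinearMap.opNorm_le_bound _ hc fun v => ?_
  refine pow_le_pow_iff_left₀ (norm_nonneg _) (by positivity) two_ne_zero |>.mp ?_
  have hv := h (ofLp v)
  rwa [← norm_toLp_sq_eq_dotProduct, ← norm_toLp_sq_eq_dotProduct, toLp_ofLp, ← mul_pow] at hv

lemma l2_opNorm_transpose [DecidableEq m] (A : Matrix m n ℝ) : ‖Aᵀ‖ = ‖A‖ := by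
  rw [← conjTranspose_eq_transpose_of_trivial, l2_opNorm_conjTranspose]

end L2OpNorm

section OrthonormalColumns

variable [DecidableEq m] [DecidableEq n]

lemma gram_one_sub_mul_transpose_mul {V : Matrix m n ℝ} (hV : Vᵀ * V = 1) (W : Matrix m n ℝ) :
    ((1 - V * Vᵀ) * W)ᵀ * ((1 - V * Vᵀ) * W) = Wᵀ * W - (Vᵀ * W)ᵀ * (Vᵀ * W) := by
  have hP : (1 - V * Vᵀ) * (1 - V * Vᵀ) = 1 - V * Vᵀ := by
    rw [sub_mul, mul_sub, mul_sub, one_mul, mul_one, one_mul, Matrix.mul_assoc V,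
      ← Matrix.mul_assoc Vᵀ V, hV, Matrix.one_mul]
    abel
  rw [transpose_mul, transpose_sub, transpose_one, transpose_mul, transpose_transpose,
    Matrix.mul_assoc, ← Matrix.mul_assoc _ _ W, hP, transpose_mul, transpose_transpose]
  simp only [Matrix.mul_sub, Matrix.sub_mul, Matrix.one_mul, Matrix.mul_assoc]

lemma one_sub_mul_transpose_mul_mulVec_dotProduct {V W : Matrix m n ℝ} (hV : Vᵀ * V = 1)
    (hW : Wᵀ * W = 1) (v : n → ℝ) :
    ((1 - V * Vᵀ) * W) *ᵥ v ⬝ᵥ ((1 - V * Vᵀ) * W) *ᵥ v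
      = v ⬝ᵥ v - (Vᵀ * W) *ᵥ v ⬝ᵥ (Vᵀ * W) *ᵥ v := by
  rw [mulVec_dotProduct_mulVec_eq, gram_one_sub_mul_transpose_mul hV, hW, sub_mulVec,
    one_mulVec, dotProduct_sub, ← mulVec_dotProduct_mulVec_eq]

theorem l2_opNorm_one_sub_mul_transpose_mul_le {V W : Matrix m n ℝ}
    (hV : Vᵀ * V = 1) (hW : Wᵀ * W = 1) : ‖(1 - W * Wᵀ) * V‖ ≤ ‖(1 - V * Vᵀ) * W‖ := by
  set s := ‖(1 - V * Vᵀ) * W‖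
  have hM : ∀ v, (1 - s ^ 2) * (v ⬝ᵥ v) ≤ (Vᵀ * W) *ᵥ v ⬝ᵥ (Vᵀ * W) *ᵥ v := fun v => by
    have hv := mulVec_dotProduct_mulVec_le ((1 - V * Vᵀ) * W) v
    rw [one_sub_mul_transpose_mul_mulVec_dotProduct hV hW] at hv
    linarith
  refine l2_opNorm_le_of_mulVec_dotProduct_le _ (norm_nonneg _) fun u => ?_
  have hMt := le_transpose_mulVec_dotProduct_of_le_mulVec_dotProduct _ hM u
  rw [transpose_mul, transpose_transpose] at hMt
  rw [one_sub_mul_transpose_mul_mulVec_dotProduct hW hV]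
  linarith

end OrthonormalColumns

end Matrix

lemma vecEnorm_eq_norm_toLp {m : ℕ} (v : Fin m → ℝ) : vecEnorm v = ‖toLp 2 v‖ := rfl

/-- For orthonormal `V, Ṽ` and unit vectors `x, y`:
`‖Vᵀ(x−y)‖ ≤ ‖Ṽᵀ(x−y)‖·‖VᵀṼ‖ + 2‖(I−VVᵀ)Ṽ‖` (spectral norms on matrices). -/
theorem distance_upper_bound {d t : ℕ} (V W : Matrix (Fin d) (Fin t) ℝ)
    (hV : Vᵀ * V = 1) (hW : Wᵀ * W = 1)
    (x y : Fin d → ℝ) (hx : vecEnorm x = 1) (hy : vecEnorm y = 1) :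
    vecEnorm (Vᵀ.mulVec (x - y))
      ≤ vecEnorm (Wᵀ.mulVec (x - y)) * ‖Vᵀ * W‖ + 2 * ‖(1 - V * Vᵀ) * W‖ := by
  simp only [vecEnorm_eq_norm_toLp] at hx hy ⊢
  have hxy : ‖toLp 2 (x - y)‖ ≤ 2 := by
    rw [toLp_sub]
    linarith [norm_sub_le (toLp 2 x) (toLp 2 y)]
  have hsplit : Vᵀ *ᵥ (x - y)
      = (Vᵀ * W) *ᵥ Wᵀ *ᵥ (x - y) + ((1 - W * Wᵀ) * V)ᵀ *ᵥ (x - y) := by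
    rw [mulVec_mulVec, ← add_mulVec, transpose_mul, transpose_sub, transpose_one, transpose_mul,
      transpose_transpose, Matrix.mul_sub, Matrix.mul_one, Matrix.mul_assoc, add_sub_cancel]
  have hs : ‖((1 - W * Wᵀ) * V)ᵀ‖ ≤ ‖(1 - V * Vᵀ) * W‖ :=
    (l2_opNorm_transpose _).trans_le (l2_opNorm_one_sub_mul_transpose_mul_le hV hW)
  calc ‖toLp 2 (Vᵀ *ᵥ (x - y))‖
      ≤ ‖Vᵀ * W‖ * ‖toLp 2 (Wᵀ *ᵥ (x - y))‖ + ‖((1 - W * Wᵀ) * V)ᵀ‖ * ‖toLp 2 (x - y)‖ := by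
        rw [hsplit, toLp_add]
        exact (norm_add_le _ _).trans
          (add_le_add (norm_toLp_mulVec_le _ _) (norm_toLp_mulVec_le _ _))
    _ ≤ ‖toLp 2 (Wᵀ *ᵥ (x - y))‖ * ‖Vᵀ * W‖ + 2 * ‖(1 - V * Vᵀ) * W‖ := by
        have hbound := mul_le_mul hs hxy (norm_nonneg _) (norm_nonneg _)
        linarith [mul_comm ‖Vᵀ * W‖ ‖toLp 2 (Wᵀ *ᵥ (x - y))‖]
end
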